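/- arXiv:1611.04157 — 2 statements merged into one kernel-verified Lean document; each statement's English description precedes it below -/
import Mathlib

section
/- Given pointed spaces X, Y and maps d : X → Y, s : Y → X with s ∘ d = id_X, the homotopy fiber of d (over the basepoint) is weakly equivalent to the loop space of the homotopy fiber of s. -/
/-!
STATEMENT 2: Given pointed spaces X, Y and maps d : X → Y, s : Y → X with
s ∘ d = id_X, the homotopy fiber of d (over the basepoint) is weakly equivalent
to the loop space of the homotopy fiber of s.
-/

noncomputable section

open scoped Topology unitInterval

/-- The map induced by a continuous map on `n`-th homotopy groups. -/
def piMap (n : ℕ) {X Y : Type*} [TopologicalSpace X] [TopologicalSpace Y]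
    (f : C(X, Y)) (x : X) : HomotopyGroup.Pi n X x → HomotopyGroup.Pi n Y (f x) :=
  Quotient.map' (fun g => ⟨f.comp g.1, fun y hy => by
      simp [ContinuousMap.comp_apply, g.2 y hy]⟩)
    (fun g h H => H.map fun F => F.compContinuousMap f)

/-- `(X, x)` is weakly equivalent to `(Y, y)`: there is a pointed map inducing
bijections on all homotopy groups. -/
def WeaklyEquivalentTo (X : Type*) [TopologicalSpace X] (x : X)
    (Y : Type*) [TopologicalSpace Y] (y : Y) : Prop :=
  ∃ f : C(X, Y), f x = y ∧ ∀ n : ℕ, Function.Bijective (piMap n f x)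

/-- The homotopy fiber of `f` over `y0`: pairs of a point `x` and a path from
`f x` to `y0`. -/
def HoFib {X Y : Type*} [TopologicalSpace X] [TopologicalSpace Y]
    (f : C(X, Y)) (y0 : Y) : Type _ :=
  {p : X × C(I, Y) // p.2 0 = f p.1 ∧ p.2 1 = y0}

instance {X Y : Type*} [TopologicalSpace X] [TopologicalSpace Y]
    (f : C(X, Y)) (y0 : Y) : TopologicalSpace (HoFib f y0) :=
  instTopologicalSpaceSubtype

/-- The canonical basepoint of the homotopy fiber of a pointed map. -/
def HoFib.pt {X Y : Type*} [TopologicalSpace X] [TopologicalSpace Y]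
    (f : C(X, Y)) {x0 : X} {y0 : Y} (hf : f x0 = y0) : HoFib f y0 :=
  ⟨(x0, ContinuousMap.const I y0), by simp [hf]⟩

/-! A point of `hofib d` is a point `x` with a path `γ` from `d x` to `y₀`. It gives the loop
`(d s γ)⁻¹ · γ` in `Y`, whose image `(s γ)⁻¹ · (s γ)` under `s` (as `s d = id`) is null-homotopic by
retracting along `s γ`: a loop in `hofib s`. Conversely, the loop in `Y` underlying a loop in
`hofib s` is a point of `hofib d` over `x₀`. Both composites are homotopic to the identity relative
to the basepoint: on `hofib d` by sliding `x` back along `s γ`; on `Ω hofib s` by reading the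
null-homotopy square of a loop `ℓ` along segments that sweep from its bottom edge over the whole
square, ending at `refl · ℓ`, which is homotopic to `ℓ`. A based homotopy equivalence induces
bijections on all homotopy groups. -/

theorem ContinuousMap.HomotopicRel.comp_of_mapsTo {A B C : Type*} [TopologicalSpace A]
    [TopologicalSpace B] [TopologicalSpace C] {f₀ f₁ : C(B, C)} {T : Set B}
    (h : f₀.HomotopicRel f₁ T) (g : C(A, B)) {S : Set A} (hg : Set.MapsTo g S T) :
    (f₀.comp g).HomotopicRel (f₁.comp g) S :=
  h.map fun F => ⟨F.toHomotopy.compContinuousMap g, fun t _ hx => F.eq_fst t (hg hx)⟩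

theorem piMap_bijective_of_homotopicRel (n : ℕ) {A B : Type*} [TopologicalSpace A]
    [TopologicalSpace B] (F : C(A, B)) (G : C(B, A)) (a : A)
    (hGF : (G.comp F).HomotopicRel (.id A) {a}) (hFG : (F.comp G).HomotopicRel (.id B) {F a}) :
    Function.Bijective (piMap n F a) := by
  refine ⟨fun α β hαβ => ?_, fun β => ?_⟩
  · induction α using Quotient.inductionOn' with | h α =>
    induction β using Quotient.inductionOn' with | h β =>
    have hF : (F.comp α.1).HomotopicRel (F.comp β.1) (Cube.boundary (Fin n)) :=
      Quotient.exact' hαβ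
    exact Quotient.sound' (((hGF.comp_of_mapsTo α.1 α.2).symm.trans
      (hF.comp_continuousMap G)).trans (hGF.comp_of_mapsTo β.1 β.2))
  · induction β using Quotient.inductionOn' with | h β =>
    have hGa : G (F a) = a := hGF.fst_eq_snd rfl
    refine ⟨Quotient.mk'' ⟨G.comp β.1, fun y hy => ?_⟩, Quotient.sound' ?_⟩
    · simp [β.2 y hy, hGa]
    · exact hFG.comp_of_mapsTo β.1 β.2

namespace Path

variable {A Z : Type*} [TopologicalSpace A] [TopologicalSpace Z]

def curry {a a' : A} (L : C(Z × I, A)) (h0 : ∀ z, L (z, 0) = a) (h1 : ∀ z, L (z, 1) = a') :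
    C(Z, Path a a') where
  toFun z := ⟨⟨fun t => L (z, t), by fun_prop⟩, h0 z, h1 z⟩
  continuous_toFun := continuous_uncurry_iff.mp L.continuous

theorem refl_trans_apply {a b : A} (γ : Path a b) (t : I) :
    ((Path.refl a).trans γ) t = γ.extend (2 * t - 1) := by
  rw [← extend_extends']
  rcases le_total (t : ℝ) (1 / 2) with ht | ht
  · rw [extend_trans_of_le_half _ _ ht, γ.extend_of_le_zero (by linarith)]
    rfl
  · exact extend_trans_of_half_le _ _ ht

end Path

/-- Runs along the left, top and right sides of the unit square, from `(0, 0)` at `ξ = 0` to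
`(1, 0)` at `ξ = 3`. -/
def squareCap (ξ : ℝ) : ℝ × ℝ := (max 0 (min 1 (ξ - 1)), min (min ξ 1) (3 - ξ))

@[fun_prop] theorem continuous_squareCap : Continuous squareCap := by
  unfold squareCap; fun_prop

theorem squareCap_of_le_one {ξ : ℝ} (h1 : ξ ≤ 1) : squareCap ξ = (0, ξ) := by
  simp only [squareCap, Prod.mk.injEq]
  constructor
  · simp [h1]
  · rw [min_eq_left h1, min_eq_left (by linarith)]

theorem squareCap_of_one_le_of_le_two {ξ : ℝ} (h1 : 1 ≤ ξ) (h2 : ξ ≤ 2) :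
    squareCap ξ = (ξ - 1, 1) := by
  simp only [squareCap, Prod.mk.injEq]
  constructor
  · rw [min_eq_right (by linarith), max_eq_right (by linarith)]
  · rw [min_eq_right h1, min_eq_left (by linarith)]

theorem squareCap_of_two_le {ξ : ℝ} (h2 : 2 ≤ ξ) : squareCap ξ = (1, 3 - ξ) := by
  simp only [squareCap, Prod.mk.injEq]
  constructor
  · rw [min_eq_left (by linarith), max_eq_right zero_le_one]
  · rw [min_eq_right (by linarith : (1 : ℝ) ≤ ξ), min_eq_right (by linarith : 3 - ξ ≤ 1)]

/-- For fixed `τ, t`, `u ↦ sweep τ t u` is a segment ending on `squareCap`; it starts at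
`(2t - 1, 0)` if `t ≥ 1/2` and on the segment from `squareCap (3 - 3τ)` to the origin if `t ≤ 1/2`.
At `τ = 0` it lies on the bottom side, at `τ = 1` it is vertical, and for `t = 0, 1` it stays in the
sides of the square where a filling is constant. -/
def sweep (τ t u : ℝ) : ℝ × ℝ :=
  (1 - u) • ((max 0 (2 * t - 1), 0) + max 0 (1 - 2 * t) • squareCap (3 - 3 * τ)) +
    u • squareCap (max (1 + max 0 (2 * t - 1)) (3 - 3 * τ))

@[fun_prop] theorem Continuous.sweep {Z : Type*} [TopologicalSpace Z] {τ t u : Z → ℝ}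
    (hτ : Continuous τ) (ht : Continuous t) (hu : Continuous u) :
    Continuous fun z => sweep (τ z) (t z) (u z) := by
  unfold _root_.sweep; fun_prop

theorem sweep_of_half_le (τ : ℝ) {t : ℝ} (ht : 1 / 2 ≤ t) : sweep τ t 0 = (2 * t - 1, 0) := by
  simp [sweep, max_eq_right (by linarith : (0 : ℝ) ≤ 2 * t - 1),
    max_eq_left (by linarith : 1 - 2 * t ≤ 0)]

theorem sweep_zero_left {t : ℝ} (ht : t ≤ 1) (u : ℝ) :
    sweep 0 t u = ((1 - u) * |1 - 2 * t| + u, 0) := by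
  have h3 : max (1 + max 0 (2 * t - 1)) 3 = 3 :=
    max_eq_right (by linarith [max_le (by norm_num : (0 : ℝ) ≤ 2) (by linarith : 2 * t - 1 ≤ 2)])
  have habs : |1 - 2 * t| = max 0 (2 * t - 1) + max 0 (1 - 2 * t) := by
    rcases le_total t (1 / 2) with h | h
    · rw [abs_of_nonneg (by linarith), max_eq_left (by linarith), max_eq_right (by linarith)]
      ring
    · rw [abs_of_nonpos (by linarith), max_eq_right (by linarith), max_eq_left (by linarith)]
      ring
  have hcap : squareCap 3 = (1, 0) := by norm_num [squareCap]
  simp only [sweep, mul_zero, sub_zero]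
  rw [h3, hcap, habs]
  ext <;> simp

theorem sweep_one_left {t : ℝ} (ht : t ≤ 1) (u : ℝ) :
    sweep 1 t u = (max 0 (2 * t - 1), u) := by
  have hmax : max (1 + max 0 (2 * t - 1)) 0 = 1 + max 0 (2 * t - 1) :=
    max_eq_left (by positivity)
  have hcap : squareCap (1 + max 0 (2 * t - 1)) = (max 0 (2 * t - 1), 1) := by
    rw [squareCap_of_one_le_of_le_two (by linarith [le_max_left (0 : ℝ) (2 * t - 1)])
      (by linarith [max_le zero_le_one (by linarith : 2 * t - 1 ≤ 1)]), add_sub_cancel_left]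
  simp only [sweep, mul_one, sub_self, hmax, hcap, squareCap_of_le_one zero_le_one]
  ext
  · simp only [Prod.fst_add, Prod.smul_fst, smul_eq_mul, mul_zero, add_zero]
    ring
  · simp

namespace HoFib

variable {A B Z : Type*} [TopologicalSpace A] [TopologicalSpace B] [TopologicalSpace Z]
  {f : C(A, B)} {b : B}

def point (z : HoFib f b) : A := z.1.1

def path (z : HoFib f b) : C(I, B) := z.1.2

theorem path_zero (z : HoFib f b) : z.path 0 = f z.point := z.2.1

theorem path_one (z : HoFib f b) : z.path 1 = b := z.2.2

@[ext] theorem ext {z z' : HoFib f b} (hx : z.point = z'.point)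
    (hγ : ∀ t, z.path t = z'.path t) : z = z' :=
  Subtype.ext (Prod.ext hx (ContinuousMap.ext hγ))

def extend (z : HoFib f b) (r : ℝ) : B := Set.IccExtend zero_le_one z.path r

theorem extend_of_nonpos (z : HoFib f b) {r : ℝ} (h : r ≤ 0) : z.extend r = f z.point :=
  (Set.IccExtend_of_le_left _ _ h).trans z.path_zero

theorem extend_of_one_le (z : HoFib f b) {r : ℝ} (h : 1 ≤ r) : z.extend r = b :=
  (Set.IccExtend_of_right_le _ _ h).trans z.path_one

@[simp] theorem extend_zero (z : HoFib f b) : z.extend 0 = f z.point :=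
  z.extend_of_nonpos le_rfl

@[simp] theorem extend_one (z : HoFib f b) : z.extend 1 = b :=
  z.extend_of_one_le le_rfl

@[simp] theorem extend_coe (z : HoFib f b) (t : I) : z.extend t = z.path t :=
  Set.IccExtend_val _ _ t

@[fun_prop] theorem continuous_point : Continuous (point : HoFib f b → A) :=
  continuous_fst.comp continuous_subtype_val

@[fun_prop] theorem _root_.Continuous.hoFib_path {g : Z → HoFib f b} {t : Z → I}
    (hg : Continuous g) (ht : Continuous t) : Continuous fun z => (g z).path (t z) := by
  change Continuous fun z => (g z).1.2 (t z)
  fun_prop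

@[fun_prop] theorem _root_.Continuous.hoFib_extend {g : Z → HoFib f b} {r : Z → ℝ}
    (hg : Continuous g) (hr : Continuous r) : Continuous fun z => (g z).extend (r z) := by
  change Continuous fun z => (g z).path (Set.projIcc 0 1 zero_le_one (r z))
  fun_prop

@[simp] theorem point_pt {a : A} (ha : f a = b) : (pt f ha).point = a := rfl

@[simp] theorem path_pt {a : A} (ha : f a = b) (t : I) : (pt f ha).path t = b := rfl

@[simp] theorem extend_pt {a : A} (ha : f a = b) (r : ℝ) : (pt f ha).extend r = b := rfl

def lift (x : Z → A) (γ : Z → I → B) (hx : Continuous x)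
    (hγ : Continuous fun p : Z × I => γ p.1 p.2) (h0 : ∀ z, γ z 0 = f (x z))
    (h1 : ∀ z, γ z 1 = b) : C(Z, HoFib f b) where
  toFun z := ⟨(x z, ⟨γ z, by fun_prop⟩), h0 z, h1 z⟩
  continuous_toFun :=
    (hx.prodMk (ContinuousMap.continuous_of_continuous_uncurry _ hγ)).subtype_mk _

@[simp] theorem point_lift {x : Z → A} {γ : Z → I → B} {hx hγ h0 h1} (z : Z) :
    (lift (f := f) (b := b) x γ hx hγ h0 h1 z).point = x z :=
  rfl

@[simp] theorem path_lift {x : Z → A} {γ : Z → I → B} {hx hγ h0 h1} (z : Z) (t : I) :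
    (lift (f := f) (b := b) x γ hx hγ h0 h1 z).path t = γ z t :=
  rfl

variable {a : A} {ha : f a = b}

def liftLoop (x : Z → I → A) (γ : Z → I → I → B) (hx : Continuous fun p : Z × I => x p.1 p.2)
    (hγ : Continuous fun p : (Z × I) × I => γ p.1.1 p.1.2 p.2)
    (hγ0 : ∀ z t, γ z t 0 = f (x z t)) (hγ1 : ∀ z t, γ z t 1 = b)
    (hstart : ∀ z, x z 0 = a ∧ ∀ u, γ z 0 u = b) (hend : ∀ z, x z 1 = a ∧ ∀ u, γ z 1 u = b) :
    C(Z, Path (pt f ha) (pt f ha)) :=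
  Path.curry (lift (fun p => x p.1 p.2) (fun p => γ p.1 p.2) hx hγ
      (fun p => hγ0 p.1 p.2) (fun p => hγ1 p.1 p.2))
    (fun z => ext (hstart z).1 (hstart z).2) (fun z => ext (hend z).1 (hend z).2)

@[simp] theorem point_liftLoop {x : Z → I → A} {γ : Z → I → I → B} {hx hγ hγ0 hγ1 hstart hend}
    (z : Z) (t : I) :
    (liftLoop (ha := ha) x γ hx hγ hγ0 hγ1 hstart hend z t).point = x z t :=
  rfl

@[simp] theorem path_liftLoop {x : Z → I → A} {γ : Z → I → I → B} {hx hγ hγ0 hγ1 hstart hend}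
    (z : Z) (t u : I) :
    (liftLoop (ha := ha) x γ hx hγ hγ0 hγ1 hstart hend z t).path u = γ z t u :=
  rfl

/-- A loop `ℓ` at the basepoint of `HoFib f b` is a loop `t ↦ (ℓ t).point` in `A` together with
the square `(t, u) ↦ (ℓ t).path u` in `B`, which is `f` of that loop on the bottom side and `b` on
the other three. `fill ℓ` is this square, extended to the plane by clamping. -/
def fill (ℓ : Path (pt f ha) (pt f ha)) (p : ℝ × ℝ) : B := (ℓ.extend p.1).extend p.2

@[fun_prop] theorem _root_.Continuous.hoFib_fill {ℓ : Z → Path (pt f ha) (pt f ha)}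
    {p : Z → ℝ × ℝ} (hℓ : Continuous ℓ) (hp : Continuous p) :
    Continuous fun z => fill (ℓ z) (p z) := by
  unfold fill; fun_prop

@[simp] theorem fill_refl (p : ℝ × ℝ) : fill (Path.refl (pt f ha)) p = b := rfl

variable (ℓ : Path (pt f ha) (pt f ha)) {p : ℝ × ℝ}

theorem fill_of_snd_nonpos (h : p.2 ≤ 0) : fill ℓ p = f (ℓ.extend p.1).point :=
  extend_of_nonpos _ h

theorem fill_of_one_le_snd (h : 1 ≤ p.2) : fill ℓ p = b :=
  extend_of_one_le _ h

theorem fill_of_fst_nonpos (h : p.1 ≤ 0) : fill ℓ p = b := by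
  rw [fill, Path.extend_of_le_zero _ h, extend_pt]

theorem fill_of_one_le_fst (h : 1 ≤ p.1) : fill ℓ p = b := by
  rw [fill, Path.extend_of_one_le _ h, extend_pt]

theorem fill_squareCap (ξ : ℝ) : fill ℓ (squareCap ξ) = b := by
  rcases le_total ξ 1 with h1 | h1
  · exact fill_of_fst_nonpos ℓ (max_le le_rfl ((min_le_right _ _).trans (by linarith)))
  rcases le_total ξ 2 with h2 | h2
  · exact fill_of_one_le_snd ℓ (le_min (le_min h1 le_rfl) (by linarith))
  · exact fill_of_one_le_fst ℓ (le_max_of_le_right (le_min le_rfl (by linarith)))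

theorem fill_sweep_one (τ t : ℝ) : fill ℓ (sweep τ t 1) = b := by
  simpa [sweep] using fill_squareCap ℓ _

theorem fill_sweep_left (τ u : ℝ) : fill ℓ (sweep τ 0 u) = b := by
  have e : sweep τ 0 u =
      (1 - u) • squareCap (3 - 3 * τ) + u • squareCap (max 1 (3 - 3 * τ)) := by
    norm_num [sweep]
  rcases le_total 1 (3 - 3 * τ) with h | h
  · rw [e, max_eq_right h, ← add_smul, sub_add_cancel, one_smul]
    exact fill_squareCap ℓ _
  · rw [e, max_eq_left h, squareCap_of_le_one h, squareCap_of_le_one le_rfl]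
    exact fill_of_fst_nonpos ℓ (by simp)

theorem fill_sweep_right (τ u : ℝ) : fill ℓ (sweep τ 1 u) = b := by
  have e : sweep τ 1 u = (1 - u) • (1, 0) + u • squareCap (max 2 (3 - 3 * τ)) := by
    norm_num [sweep]
  rw [e, squareCap_of_two_le (le_max_left _ _)]
  exact fill_of_one_le_fst ℓ (by simp)

end HoFib

section Retract

variable {X Y : Type*} [TopologicalSpace X] [TopologicalSpace Y] {x0 : X} {y0 : Y}
  {d : C(X, Y)} {s : C(Y, X)}

open HoFib

def hoFibToLoop (hd : d x0 = y0) (hs : s y0 = x0) (hret : ∀ x, s (d x) = x) :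
    C(HoFib d y0, Path (pt s hs) (pt s hs)) :=
  liftLoop
    (fun z t => if (t : ℝ) ≤ 1 / 2 then d (s (z.extend (1 - 2 * t))) else z.extend (2 * t - 1))
    (fun z t u => s (z.extend ((1 - u) * |1 - 2 * (t : ℝ)| + u)))
    (Continuous.if_le (by fun_prop) (by fun_prop) (by fun_prop) continuous_const
      fun p hp => by simp [hp, hret])
    (by fun_prop)
    (fun z t => by
      split_ifs with ht
      · simp [abs_of_nonneg (by linarith : (0 : ℝ) ≤ 1 - 2 * t), hret]
      · simp [abs_of_neg (by linarith : 1 - 2 * (t : ℝ) < 0)])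
    (fun z t => by simp [hs])
    (fun z => ⟨by simp [hs, hd], fun u => by simp [hs]⟩)
    (fun z => ⟨by norm_num, fun u => by norm_num [hs]⟩)

def loopToHoFib (hd : d x0 = y0) (hs : s y0 = x0) : C(Path (pt s hs) (pt s hs), HoFib d y0) :=
  lift (fun _ => x0) (fun ℓ t => (ℓ t).point) continuous_const (by fun_prop)
    (fun ℓ => by simp [hd]) (fun ℓ => by simp)

theorem loopToHoFib_extend (hd : d x0 = y0) (hs : s y0 = x0) (ℓ : Path (pt s hs) (pt s hs))
    (r : ℝ) : (loopToHoFib hd hs ℓ).extend r = (ℓ.extend r).point :=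
  rfl

theorem hoFibToLoop_pt (hd : d x0 = y0) (hs : s y0 = x0) (hret : ∀ x, s (d x) = x) :
    hoFibToLoop hd hs hret (pt d hd) = Path.refl (pt s hs) := by
  ext t u
  · simp [hoFibToLoop, hs, hd]
  · simp [hoFibToLoop, hs]

theorem loopToHoFib_refl (hd : d x0 = y0) (hs : s y0 = x0) :
    loopToHoFib hd hs (Path.refl (pt s hs)) = pt d hd := by
  ext t
  · rfl
  · rfl

/-- At time `τ`: the point `s (γ (1 - τ))` with the path `(d s γ|[0, 1 - τ])⁻¹ · γ`. -/
def slideBack (hret : ∀ x, s (d x) = x) : C(I × HoFib d y0, HoFib d y0) :=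
  have hpos (τ : I) : (0 : ℝ) < 1 + τ := by linarith [τ.2.1]
  lift (fun p => s (p.2.extend (1 - p.1)))
    (fun p t => if (t : ℝ) ≤ (1 - p.1) / 2 then d (s (p.2.extend (1 - p.1 - 2 * t)))
      else p.2.extend ((2 * t - 1 + p.1) / (1 + p.1)))
    (by fun_prop)
    (Continuous.if_le (by fun_prop) (by fun_prop (disch := exact fun p => (hpos p.1.1).ne'))
      (by fun_prop) (by fun_prop) fun p hp => by
        rw [show 1 - (p.1.1 : ℝ) - 2 * p.2 = 0 by linarith,
          show (2 * (p.2 : ℝ) - 1 + p.1.1) / (1 + p.1.1) = 0 by rw [hp]; field_simp; ring]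
        simp [hret])
    (fun p => by simp [(by linarith [p.1.2.2] : (0 : ℝ) ≤ (1 - p.1) / 2)])
    (fun p => by
      rw [Set.Icc.coe_one, if_neg (by linarith [p.1.2.1]),
        (div_eq_one_iff_eq (hpos p.1).ne').mpr (by ring)]
      simp)

theorem slideBack_zero (hd : d x0 = y0) (hs : s y0 = x0) (hret : ∀ x, s (d x) = x)
    (z : HoFib d y0) : slideBack hret (0, z) = loopToHoFib hd hs (hoFibToLoop hd hs hret z) := by
  ext t
  · simp [slideBack, hs, loopToHoFib]
  · simp [slideBack, hoFibToLoop, loopToHoFib]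

theorem slideBack_one (hret : ∀ x, s (d x) = x) (z : HoFib d y0) : slideBack hret (1, z) = z := by
  ext t
  · simp [slideBack, hret]
  · simp only [slideBack, path_lift, Set.Icc.coe_one, sub_self, zero_div]
    split_ifs with ht
    · rw [show t = 0 from Subtype.ext (le_antisymm ht t.2.1)]
      simp [hret, path_zero]
    · rw [show (2 * t - 1 + 1) / (1 + 1) = (t : ℝ) by ring, extend_coe]

theorem slideBack_pt (hd : d x0 = y0) (hs : s y0 = x0) (hret : ∀ x, s (d x) = x) (τ : I) :
    slideBack hret (τ, pt d hd) = pt d hd := by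
  ext t
  · simp [slideBack, hs]
  · simp [slideBack, hs, hd]

theorem loopToHoFib_comp_hoFibToLoop_homotopicRel (hd : d x0 = y0) (hs : s y0 = x0)
    (hret : ∀ x, s (d x) = x) :
    ((loopToHoFib hd hs).comp (hoFibToLoop hd hs hret)).HomotopicRel (.id _) {pt d hd} :=
  ⟨{ toContinuousMap := slideBack hret
     map_zero_left := slideBack_zero hd hs hret
     map_one_left := slideBack_one hret
     prop' := by
       rintro τ z rfl
       exact (slideBack_pt hd hs hret τ).trans
         (by rw [ContinuousMap.comp_apply, hoFibToLoop_pt, loopToHoFib_refl]) }⟩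

def sweepLoop (hd : d x0 = y0) (hs : s y0 = x0) (hret : ∀ x, s (d x) = x) :
    C(I × Path (pt s hs) (pt s hs), Path (pt s hs) (pt s hs)) :=
  liftLoop
    (fun p t => if (t : ℝ) ≤ 1 / 2 then d (fill p.2 (sweep p.1 t 0))
      else (p.2.extend (2 * t - 1)).point)
    (fun p t u => fill p.2 (sweep p.1 t u))
    (Continuous.if_le (by fun_prop) (by fun_prop) (by fun_prop) (by fun_prop) fun q hq => by
      rw [hq, sweep_of_half_le _ le_rfl, fill_of_fst_nonpos _ (by norm_num)]
      simp [hd])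
    (by fun_prop)
    (fun p t => by
      split_ifs with ht
      · simp [hret]
      · rw [Set.Icc.coe_zero, sweep_of_half_le _ (not_le.mp ht).le]
        exact fill_of_snd_nonpos _ le_rfl)
    (fun p t => by simpa using fill_sweep_one p.2 p.1 t)
    (fun p => ⟨by simp [fill_sweep_left, hd], fun u => by simpa using fill_sweep_left p.2 p.1 u⟩)
    (fun p => ⟨by norm_num, fun u => by simpa using fill_sweep_right p.2 p.1 u⟩)

theorem sweepLoop_zero (hd : d x0 = y0) (hs : s y0 = x0) (hret : ∀ x, s (d x) = x)
    (ℓ : Path (pt s hs) (pt s hs)) :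
    sweepLoop hd hs hret (0, ℓ) = hoFibToLoop hd hs hret (loopToHoFib hd hs ℓ) := by
  ext t u
  · simp only [sweepLoop, hoFibToLoop, point_liftLoop, loopToHoFib_extend]
    split_ifs with ht
    · rw [Set.Icc.coe_zero, sweep_zero_left t.2.2, fill_of_snd_nonpos _ le_rfl]
      simp [abs_of_nonneg (by linarith : (0 : ℝ) ≤ 1 - 2 * t)]
    · rfl
  · simp only [sweepLoop, hoFibToLoop, path_liftLoop, loopToHoFib_extend, Set.Icc.coe_zero,
      sweep_zero_left t.2.2]
    exact fill_of_snd_nonpos _ le_rfl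

theorem sweepLoop_one (hd : d x0 = y0) (hs : s y0 = x0) (hret : ∀ x, s (d x) = x)
    (ℓ : Path (pt s hs) (pt s hs)) : sweepLoop hd hs hret (1, ℓ) = (Path.refl _).trans ℓ := by
  ext t u
  · simp only [sweepLoop, point_liftLoop, Path.refl_trans_apply, Set.Icc.coe_one,
      sweep_one_left t.2.2]
    split_ifs with ht
    · rw [max_eq_left (by linarith), fill_of_fst_nonpos _ le_rfl,
        ℓ.extend_of_le_zero (by linarith)]
      simp [hd]
    · rfl
  · simp only [sweepLoop, path_liftLoop, Path.refl_trans_apply, Set.Icc.coe_one,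
      sweep_one_left t.2.2]
    rcases le_total (t : ℝ) (1 / 2) with ht | ht
    · rw [max_eq_left (by linarith), fill_of_fst_nonpos _ le_rfl,
        ℓ.extend_of_le_zero (by linarith)]
      rfl
    · rw [max_eq_right (by linarith), fill, extend_coe]

theorem sweepLoop_refl (hd : d x0 = y0) (hs : s y0 = x0) (hret : ∀ x, s (d x) = x) (τ : I) :
    sweepLoop hd hs hret (τ, Path.refl (pt s hs)) = Path.refl (pt s hs) := by
  ext t u
  · simp [sweepLoop, hd]
  · simp [sweepLoop]

theorem hoFibToLoop_comp_loopToHoFib_homotopicRel (hd : d x0 = y0) (hs : s y0 = x0)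
    (hret : ∀ x, s (d x) = x) :
    ((hoFibToLoop hd hs hret).comp (loopToHoFib hd hs)).HomotopicRel
      (HSpace.hmul.comp ((ContinuousMap.const _ HSpace.e).prodMk (.id _)))
      {Path.refl (pt s hs)} :=
  ⟨{ toContinuousMap := sweepLoop hd hs hret
     map_zero_left := sweepLoop_zero hd hs hret
     map_one_left := sweepLoop_one hd hs hret
     prop' := by
       rintro τ ℓ rfl
       exact (sweepLoop_refl hd hs hret τ).trans
         (by rw [ContinuousMap.comp_apply, loopToHoFib_refl, hoFibToLoop_pt]) }⟩

end Retract

theorem statement2 {X Y : Type*} [TopologicalSpace X] [TopologicalSpace Y]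
    (x0 : X) (y0 : Y) (d : C(X, Y)) (s : C(Y, X))
    (hd : d x0 = y0) (hs : s y0 = x0)
    (hret : ∀ x : X, s (d x) = x) :
    WeaklyEquivalentTo (HoFib d y0) (HoFib.pt d hd)
      (Path (HoFib.pt s hs) (HoFib.pt s hs)) (Path.refl (HoFib.pt s hs)) := by
  refine ⟨hoFibToLoop hd hs hret, hoFibToLoop_pt hd hs hret, fun n =>
    piMap_bijective_of_homotopicRel n _ (loopToHoFib hd hs) _
      (loopToHoFib_comp_hoFibToLoop_homotopicRel hd hs hret) ?_⟩
  rw [hoFibToLoop_pt]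
  exact (hoFibToLoop_comp_loopToHoFib_homotopicRel hd hs hret).trans ⟨HSpace.eHmul⟩

end
end

section
/- The inclusion Δ_res ⊆ Δ of the restricted simplex category (injective order-preserving maps only) into the simplex category is left cofinal (initial). -/
/-!
STATEMENT 7: The inclusion Δ_res ⊆ Δ of the restricted simplex category
(injective order-preserving maps only) into the simplex category is left
cofinal (initial).
-/

open CategoryTheory

/-- The restricted simplex category `Δ_res`: the wide subcategory of the
simplex category whose morphisms are the monomorphisms (equivalently the
strictly monotone maps). -/
def DeltaRes : Type :=
  WideSubcategory (MorphismProperty.monomorphisms SimplexCategory)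

instance : Category DeltaRes :=
  inferInstanceAs
    (Category (WideSubcategory (MorphismProperty.monomorphisms SimplexCategory)))

/-- The inclusion functor `Δ_res ⥤ Δ`. -/
def deltaResInclusion : DeltaRes ⥤ SimplexCategory :=
  wideSubcategoryInclusion (MorphismProperty.monomorphisms SimplexCategory)

/-!
Every object `f : ⦋m⦌ ⟶ d` of the comma category `Δ_res ↓ d` receives a morphism from the
vertex `⦋0⦌ ⟶ d` at `f 0` (any map out of `⦋0⦌` is injective), and two vertices `i ≤ j` are
both faces of the edge `⦋1⦌ ⟶ d` from `i` to `j`. Hence the comma category is connected.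
-/

open Simplicial

namespace SimplexCategory

lemma mono_of_source_zero {x : SimplexCategory} (f : ⦋0⦌ ⟶ x) : Mono f :=
  mono_iff_injective.2 fun a b _ => Subsingleton.elim (α := Fin 1) a b

end SimplexCategory

namespace DeltaRes

open SimplexCategory

variable {d : SimplexCategory}

def vertex (d : SimplexCategory) (i : Fin (d.len + 1)) : CostructuredArrow deltaResInclusion d :=
  CostructuredArrow.mk (Y := (⟨⦋0⦌⟩ : DeltaRes)) (const ⦋0⦌ d i)

def edge (i j : Fin (d.len + 1)) (h : i ≤ j) : CostructuredArrow deltaResInclusion d :=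
  CostructuredArrow.mk (Y := (⟨⦋1⦌⟩ : DeltaRes)) (mkOfLe i j h)

def vertexToEdge (i j : Fin (d.len + 1)) (h : i ≤ j) (k : Fin 2) :
    vertex d ((mkOfLe i j h).toOrderHom k) ⟶ edge i j h :=
  CostructuredArrow.homMk ⟨const ⦋0⦌ ⦋1⦌ k, mono_of_source_zero _⟩ (Hom.ext_zero_left _ _)

lemma zigzag_vertex_of_le {i j : Fin (d.len + 1)} (h : i ≤ j) :
    Zigzag (vertex d i) (vertex d j) :=
  Zigzag.of_hom_inv (vertexToEdge i j h 0) (vertexToEdge i j h 1)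

lemma zigzag_vertex (i j : Fin (d.len + 1)) : Zigzag (vertex d i) (vertex d j) := by
  rcases le_total i j with h | h
  · exact zigzag_vertex_of_le h
  · exact (zigzag_vertex_of_le h).symm

def fromVertex (f : CostructuredArrow deltaResInclusion d) :
    vertex d (f.hom.toOrderHom 0) ⟶ f :=
  CostructuredArrow.homMk ⟨const ⦋0⦌ f.left.obj 0, mono_of_source_zero _⟩ (Hom.ext_zero_left _ _)

lemma zigzag_costructuredArrow (f g : CostructuredArrow deltaResInclusion d) : Zigzag f g :=
  (Zigzag.of_inv (fromVertex f)).trans <|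
    (zigzag_vertex _ _).trans (Zigzag.of_hom (fromVertex g))

instance isConnected_costructuredArrow (d : SimplexCategory) :
    IsConnected (CostructuredArrow deltaResInclusion d) :=
  have : Nonempty (CostructuredArrow deltaResInclusion d) := ⟨vertex d 0⟩
  zigzag_isConnected zigzag_costructuredArrow

end DeltaRes

/-- The inclusion of the restricted simplex category into the simplex category
is left cofinal (initial): every comma category over an object of Δ has
connected nonempty nerve. -/
theorem statement7 : deltaResInclusion.Initial :=
  ⟨fun _ => inferInstance⟩
end
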